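/- Fix two points a, b in ℝ³ and define the triangle-area function f(x) = (1/2)·‖(a − x) × (b − x)‖. Let v be a point such that v, a, b are noncollinear, let α be the interior angle of the triangle [v, a, b] at the vertex a and β its interior angle at the vertex b. Then f is differentiable at v and its gradient at v equals (1/2)·( cot α · (v − b) + cot β · (v − a) ); equivalently, for every u ∈ ℝ³ the derivative of f at v in direction u equals ⟨(1/2)(cot α (v − b) + cot β (v − a)), u⟩. -/

import Mathlib

open Real InnerProductGeometry

/-- The cross product on `ℝ³ = EuclideanSpace ℝ (Fin 3)`. -/
noncomputable def cross3 (u v : EuclideanSpace ℝ (Fin 3)) : EuclideanSpace ℝ (Fin 3) :=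
  (EuclideanSpace.equiv (Fin 3) ℝ).symm
    (crossProduct ((EuclideanSpace.equiv (Fin 3) ℝ) u) ((EuclideanSpace.equiv (Fin 3) ℝ) v))

/-!
The map `x ↦ (a - x) × (b - x) = a × b + (b - a) × x` is affine, so the derivative of its norm
at `v` is `u ↦ ⟨w, (b - a) × u⟩ / ‖w‖` with `w = (a - v) × (b - v)`. Lagrange's identity expands
`⟨w, (b - a) × u⟩` into inner products of the edge vectors, and these match the cotangents because
`cot ∠(x, y) = ⟨x, y⟩ / ‖x × y‖` while the cross product of the two edges at any vertex of the
triangle has norm `‖w‖`.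
-/

open scoped RealInnerProductSpace

section

variable {E F : Type*} [NormedAddCommGroup E] [NormedSpace ℝ E]
  [NormedAddCommGroup F] [InnerProductSpace ℝ F] {f : E → F} {f' : E →L[ℝ] F} {x : E}

theorem HasFDerivAt.norm_of_ne_zero (hf : HasFDerivAt f f' x) (h0 : f x ≠ 0) :
    HasFDerivAt (fun y => ‖f y‖) (‖f x‖⁻¹ • (innerSL ℝ (f x)).comp f') x := by
  have hsqrt := hf.norm_sq.sqrt (by positivity)
  simp only [sqrt_sq (norm_nonneg _)] at hsqrt
  convert hsqrt using 1
  ext u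
  simp only [smul_apply, ContinuousLinearMap.comp_apply, smul_eq_mul, nsmul_eq_mul, Nat.cast_ofNat]
  field_simp

end

local notation "ℝ³" => EuclideanSpace ℝ (Fin 3)

theorem inner_cross3_cross3 (u v w x : ℝ³) :
    ⟪cross3 u v, cross3 w x⟫ = ⟪u, w⟫ * ⟪v, x⟫ - ⟪u, x⟫ * ⟪v, w⟫ := by
  simp only [EuclideanSpace.inner_eq_star_dotProduct, star_trivial, cross3]
  exact (cross_dot_cross _ _ _ _).trans (congrArg (_ - ·) (mul_comm _ _))

theorem norm_cross3 (x y : ℝ³) : ‖cross3 x y‖ = sin (angle x y) * (‖x‖ * ‖y‖) := by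
  rw [sin_angle_mul_norm_mul_norm, ← sqrt_sq (norm_nonneg _), ← real_inner_self_eq_norm_sq,
    inner_cross3_cross3, real_inner_comm y x]

theorem cot_angle_eq_inner_div_norm_cross3 (x y : ℝ³) :
    cot (angle x y) = ⟪x, y⟫ / ‖cross3 x y‖ := by
  rw [cot_eq_cos_div_sin, norm_cross3, cos_angle, div_div]
  ring

theorem cross3_anticomm (x y : ℝ³) : cross3 y x = -cross3 x y := by
  ext i; fin_cases i <;> simp [cross3, cross_apply] <;> ring

theorem cross3_sub_sub_eq_neg_cross3_sub_sub (x p q : ℝ³) :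
    cross3 (x - p) (q - p) = -cross3 (p - x) (q - x) := by
  ext i; fin_cases i <;> simp [cross3, cross_apply] <;> ring

theorem cross3_sub_sub (p q x : ℝ³) : cross3 (p - x) (q - x) = cross3 p q + cross3 (q - p) x := by
  ext i; fin_cases i <;> simp [cross3, cross_apply] <;> ring

noncomputable def cross3L (c : ℝ³) : ℝ³ →L[ℝ] ℝ³ :=
  ((EuclideanSpace.equiv (Fin 3) ℝ).symm : (Fin 3 → ℝ) →L[ℝ] ℝ³) ∘L
    LinearMap.toContinuousLinearMap (crossProduct (EuclideanSpace.equiv (Fin 3) ℝ c)) ∘L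
    (EuclideanSpace.equiv (Fin 3) ℝ : ℝ³ →L[ℝ] (Fin 3 → ℝ))

theorem cross3L_apply (c x : ℝ³) : cross3L c x = cross3 c x := rfl

theorem hasFDerivAt_cross3_sub_sub (p q x : ℝ³) :
    HasFDerivAt (fun y => cross3 (p - y) (q - y)) (cross3L (q - p)) x := by
  simp only [cross3_sub_sub, ← cross3L_apply (q - p)]
  exact (cross3L (q - p)).hasFDerivAt.const_add _

theorem cross3_sub_sub_ne_zero {v a b : ℝ³} (h : ¬Collinear ℝ ({v, a, b} : Set ℝ³)) :
    cross3 (a - v) (b - v) ≠ 0 := by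
  rw [Set.insert_comm] at h
  have hsin := EuclideanGeometry.sin_pos_of_not_collinear h
  have hav := sub_ne_zero.2 (ne₁₂_of_not_collinear h)
  have hbv := sub_ne_zero.2 (ne₂₃_of_not_collinear h).symm
  rw [← norm_pos_iff, norm_cross3]
  exact mul_pos hsin (mul_pos (norm_pos_iff.2 hav) (norm_pos_iff.2 hbv))

theorem inner_cot_smul_add_cot_smul (a b v u : ℝ³) :
    ⟪cot (angle (v - a) (b - a)) • (v - b) + cot (angle (v - b) (a - b)) • (v - a), u⟫
      = ⟪cross3 (a - v) (b - v), cross3 (b - a) u⟫ / ‖cross3 (a - v) (b - v)‖ := by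
  have hα : cross3 (v - a) (b - a) = -cross3 (a - v) (b - v) :=
    cross3_sub_sub_eq_neg_cross3_sub_sub v a b
  have hβ : cross3 (v - b) (a - b) = cross3 (a - v) (b - v) := by
    rw [cross3_sub_sub_eq_neg_cross3_sub_sub, cross3_anticomm (a - v), neg_neg]
  rw [cot_angle_eq_inner_div_norm_cross3, cot_angle_eq_inner_div_norm_cross3, hα, hβ, norm_neg,
    inner_cross3_cross3]
  clear hα hβ
  obtain ⟨p, rfl⟩ : ∃ p, a = v + p := ⟨a - v, by abel⟩
  obtain ⟨q, rfl⟩ : ∃ q, b = v + q := ⟨b - v, by abel⟩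
  simp only [add_sub_cancel_left, sub_add_cancel_left, add_sub_add_left_eq_sub, inner_add_left,
    real_inner_smul_left, inner_neg_left, inner_sub_right, real_inner_comm p q]
  ring

/-- The gradient of the triangle-area function `x ↦ (1/2)‖(a - x) × (b - x)‖` at a point `v`
noncollinear with `a, b` is `(1/2)(cot α (v - b) + cot β (v - a))`, where `α`, `β` are the
interior angles of the triangle `[v, a, b]` at `a` and `b`. -/
theorem gradient_triangle_area (a b v : EuclideanSpace ℝ (Fin 3))
    (h : ¬ Collinear ℝ ({v, a, b} : Set (EuclideanSpace ℝ (Fin 3)))) :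
    HasGradientAt (fun x => (1/2 : ℝ) * ‖cross3 (a - x) (b - x)‖)
      ((1/2 : ℝ) • (Real.cot (angle (v - a) (b - a)) • (v - b)
        + Real.cot (angle (v - b) (a - b)) • (v - a))) v := by
  rw [hasGradientAt_iff_hasFDerivAt]
  refine (((hasFDerivAt_cross3_sub_sub a b v).norm_of_ne_zero
    (cross3_sub_sub_ne_zero h)).const_mul (1/2 : ℝ)).congr_fderiv ?_
  ext u
  rw [InnerProductSpace.toDual_apply_apply, real_inner_smul_left, inner_cot_smul_add_cot_smul]
  simp [cross3L_apply, div_eq_inv_mul]
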